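/- arXiv:2005.09152 — 2 statements merged into one kernel-verified Lean document; each statement's English description precedes it below -/
import Mathlib

section
/- Let D be the incidence matrix of a tree on vertices {1,...,n} rooted at vertex 1, and let P be the (n-1)×(n-1) path matrix whose i-th column is the incidence vector of the path from vertex i+1 to the root 1. Then the Moore–Penrose pseudo-inverse of D is D^+ = [ -(1/n) P 1 , P J ], where 1 is the all-ones vector in R^{n-1} and J = I - (1/n) 1 1^T. -/
open Matrix

/-- Signed incidence matrix of an oriented graph with `n` vertices and `m` edges. -/
def incMat (n m : ℕ) (tail head : Fin m → Fin n) : Matrix (Fin n) (Fin m) ℝ :=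
  Matrix.of fun i j => (if tail j = i then (1 : ℝ) else 0) - (if head j = i then (1 : ℝ) else 0)

/-- Source vertex of an oriented step (edge together with a traversal direction). -/
def stepSrc {n m : ℕ} (tail head : Fin m → Fin n) (p : Fin m × Bool) : Fin n :=
  if p.2 then tail p.1 else head p.1

/-- Destination vertex of an oriented step. -/
def stepDst {n m : ℕ} (tail head : Fin m → Fin n) (p : Fin m × Bool) : Fin n :=
  if p.2 then head p.1 else tail p.1

/-- `IsOPath tail head steps s t` : the list of directed steps forms a walk from `s` to `t`. -/
def IsOPath {n m : ℕ} (tail head : Fin m → Fin n) :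
    List (Fin m × Bool) → Fin n → Fin n → Prop
  | [], s, t => s = t
  | p :: rest, s, t => stepSrc tail head p = s ∧ IsOPath tail head rest (stepDst tail head p) t

/-- Signed incidence vector of a path given by its list of directed steps. -/
def pathVec {m : ℕ} (steps : List (Fin m × Bool)) (j : Fin m) : ℝ :=
  (steps.map (fun p => if p.1 = j then (if p.2 then (1 : ℝ) else -1) else 0)).sum

/-- The four Penrose conditions characterizing the Moore–Penrose pseudo-inverse. -/
def IsMoorePenrose {n m : ℕ} (A : Matrix (Fin n) (Fin m) ℝ) (B : Matrix (Fin m) (Fin n) ℝ) : Prop :=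
  A * B * A = A ∧ B * A * B = B ∧ (A * B)ᵀ = A * B ∧ (B * A)ᵀ = B * A

/-- The oriented graph is simple: no self-loops and no multi-edges. -/
def SimpleOriented {n m : ℕ} (tail head : Fin m → Fin n) : Prop :=
  (∀ j, tail j ≠ head j) ∧
  ∀ j k, j ≠ k →
    ¬((tail j = tail k ∧ head j = head k) ∨ (tail j = head k ∧ head j = tail k))

/-- The graph is connected: any two vertices are joined by a path. -/
def OConnected {n m : ℕ} (tail head : Fin m → Fin n) : Prop :=
  ∀ u v : Fin n, ∃ steps, IsOPath tail head steps u v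

/-- The graph is acyclic: no nonempty closed walk with pairwise distinct edges. -/
def OAcyclic {n m : ℕ} (tail head : Fin m → Fin n) : Prop :=
  ∀ (v : Fin n) (steps : List (Fin m × Bool)), steps ≠ [] →
    (steps.map Prod.fst).Nodup → ¬ IsOPath tail head steps v v

/-! Telescoping along each root path gives `D P = [e_{i+1} - e_0]_i`, so deleting the root row
`D₀` of `D` leaves a square matrix with `D₀ P = 1`. The candidate is `B = P C₀`, where
`C = I - 𝟙𝟙ᵀ/(n+1)` is the centering matrix and `C₀` is `C` without its root row. The columns of `D`
sum to zero, so `C D = D`, whence `B D = P D₀ = 1`; and `D B = (D P) C₀ = C` is symmetric. These two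
identities give all four Penrose conditions. -/

lemma pathVec_nil {m : ℕ} : pathVec ([] : List (Fin m × Bool)) = 0 := by
  ext; simp [pathVec]

lemma pathVec_cons {m : ℕ} (p : Fin m × Bool) (steps : List (Fin m × Bool)) :
    pathVec (p :: steps) = Pi.single p.1 (if p.2 then 1 else -1) + pathVec steps := by
  ext j
  simp only [pathVec, List.map_cons, List.sum_cons, Pi.add_apply, Pi.single_apply,
    eq_comm (a := j)]

lemma incMat_mulVec_single_step {N m : ℕ} (tail head : Fin m → Fin N) (p : Fin m × Bool) :
    incMat N m tail head *ᵥ Pi.single p.1 (if p.2 then 1 else -1)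
      = Pi.single (stepSrc tail head p) 1 - Pi.single (stepDst tail head p) 1 := by
  obtain ⟨e, _ | _⟩ := p <;> ext v <;> simp [incMat, stepSrc, stepDst, Pi.single_apply, eq_comm]

lemma incMat_mulVec_pathVec {N m : ℕ} {tail head : Fin m → Fin N}
    {steps : List (Fin m × Bool)} {s t : Fin N} (h : IsOPath tail head steps s t) :
    incMat N m tail head *ᵥ pathVec steps = Pi.single s 1 - Pi.single t 1 := by
  induction steps generalizing s with
  | nil =>
    obtain rfl : s = t := h
    rw [pathVec_nil, mulVec_zero, sub_self]
  | cons p steps ih =>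
    obtain ⟨rfl, h⟩ := h
    rw [pathVec_cons, mulVec_add, incMat_mulVec_single_step, ih h, sub_add_sub_cancel]

lemma sum_incMat_apply {N m : ℕ} (tail head : Fin m → Fin N) (j : Fin m) :
    ∑ v, incMat N m tail head v j = 0 := by
  simp [incMat, Finset.sum_sub_distrib]

lemma isMoorePenrose_of_mul_eq_one {n m : ℕ} {A : Matrix (Fin n) (Fin m) ℝ}
    {B : Matrix (Fin m) (Fin n) ℝ} (hBA : B * A = 1) (hAB : (A * B)ᵀ = A * B) :
    IsMoorePenrose A B :=
  ⟨by rw [Matrix.mul_assoc, hBA, Matrix.mul_one], by rw [hBA, Matrix.one_mul], hAB,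
    by rw [hBA, transpose_one]⟩

noncomputable def centeringMatrix (ι : Type*) [Fintype ι] [DecidableEq ι] : Matrix ι ι ℝ :=
  1 - (Fintype.card ι : ℝ)⁻¹ • of fun _ _ => 1

section centeringMatrix

variable {ι : Type*} [Fintype ι] [DecidableEq ι]

lemma centeringMatrix_apply (u w : ι) :
    centeringMatrix ι u w = (if u = w then 1 else 0) - (Fintype.card ι : ℝ)⁻¹ := by
  simp [centeringMatrix, one_apply]

lemma centeringMatrix_transpose : (centeringMatrix ι)ᵀ = centeringMatrix ι := by
  ext u w; simp [centeringMatrix_apply, eq_comm]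

lemma sum_centeringMatrix_apply [Nonempty ι] (w : ι) : ∑ u, centeringMatrix ι u w = 0 := by
  simp [centeringMatrix_apply, Finset.sum_sub_distrib]

lemma centeringMatrix_mul_of_sum_eq_zero {κ : Type*} {A : Matrix ι κ ℝ}
    (hA : ∀ j, ∑ v, A v j = 0) : centeringMatrix ι * A = A := by
  have hJA : (of fun _ _ => 1 : Matrix ι ι ℝ) * A = 0 := by
    ext u j
    simp [mul_apply, hA]
  rw [centeringMatrix, Matrix.sub_mul, Matrix.one_mul, Matrix.smul_mul, hJA, smul_zero, sub_zero]

end centeringMatrix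

-- A matrix with zero column sums is recovered from its non-root rows.
lemma sum_single_succ_sub_single_zero_mul {n : ℕ} {C : Matrix (Fin (n + 1)) (Fin (n + 1)) ℝ}
    (hC : ∀ w, ∑ v, C v w = 0) (u w : Fin (n + 1)) :
    ∑ i : Fin n, (Pi.single i.succ 1 - Pi.single 0 1 : Fin (n + 1) → ℝ) u * C i.succ w = C u w := by
  cases u using Fin.cases with
  | zero =>
    have hCw := hC w
    rw [Fin.sum_univ_succ] at hCw
    simp [Fin.succ_ne_zero, Finset.sum_neg_distrib]
    linarith
  | succ k => simp [Pi.single_apply, Fin.succ_ne_zero]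

theorem isMoorePenrose_mul_submatrix_centeringMatrix {n : ℕ} {A : Matrix (Fin (n + 1)) (Fin n) ℝ}
    {P : Matrix (Fin n) (Fin n) ℝ} (hA : ∀ j, ∑ v, A v j = 0)
    (hAP : ∀ i, A *ᵥ (fun j => P j i) = Pi.single i.succ 1 - Pi.single 0 1) :
    IsMoorePenrose A (P * (centeringMatrix (Fin (n + 1))).submatrix Fin.succ id) := by
  set C := centeringMatrix (Fin (n + 1))
  have hAP_apply : ∀ u i, (A * P) u i = (Pi.single i.succ 1 - Pi.single 0 1 : Fin (n + 1) → ℝ) u :=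
    fun u i => congrFun (hAP i) u
  have hA₀P : A.submatrix Fin.succ id * P = 1 := by
    ext k i
    rw [← submatrix_id_id P, ← submatrix_mul _ _ _ _ _ Function.bijective_id, submatrix_apply,
      hAP_apply]
    simp [Pi.single_apply, one_apply, Fin.succ_ne_zero]
  have hBA : P * C.submatrix Fin.succ id * A = 1 := by
    rw [Matrix.mul_assoc, ← submatrix_id_id A, ← submatrix_mul _ _ _ _ _ Function.bijective_id,
      centeringMatrix_mul_of_sum_eq_zero hA, mul_eq_one_comm.mp hA₀P]
  have hAB : A * (P * C.submatrix Fin.succ id) = C := by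
    ext u w
    rw [← Matrix.mul_assoc, mul_apply]
    simp only [hAP_apply, submatrix_apply, id]
    exact sum_single_succ_sub_single_zero_mul sum_centeringMatrix_apply u w
  exact isMoorePenrose_of_mul_eq_one hBA (by rw [hAB, centeringMatrix_transpose])

theorem stmt5_general (n : ℕ) (tail head : Fin n → Fin (n + 1))
    (P : Matrix (Fin n) (Fin n) ℝ)
    (pathsteps : Fin n → List (Fin n × Bool))
    (hP : ∀ i : Fin n, ((pathsteps i).map Prod.fst).Nodup ∧
      IsOPath tail head (pathsteps i) i.succ 0 ∧
      ∀ j : Fin n, P j i = pathVec (pathsteps i) j) :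
    IsMoorePenrose (incMat (n + 1) n tail head)
      (Matrix.of fun (j : Fin n) (i : Fin (n + 1)) =>
        if h : i = 0 then -(1 / (n + 1 : ℝ)) * ∑ k : Fin n, P j k
        else ((P * ((1 : Matrix (Fin n) (Fin n) ℝ) -
          ((n + 1 : ℝ))⁻¹ • Matrix.of (fun _ _ => (1 : ℝ))) :
            Matrix (Fin n) (Fin n) ℝ)) j (i.pred h)) := by
  have hDP : ∀ i, incMat (n + 1) n tail head *ᵥ (fun j => P j i)
      = Pi.single i.succ 1 - Pi.single 0 1 := by
    intro i
    obtain ⟨-, hpath, hPi⟩ := hP i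
    rw [show (fun j => P j i) = pathVec (pathsteps i) from funext hPi]
    exact incMat_mulVec_pathVec hpath
  convert isMoorePenrose_mul_submatrix_centeringMatrix (sum_incMat_apply tail head) hDP using 1
  ext j i
  cases i using Fin.cases with
  | zero => simp [mul_apply, centeringMatrix_apply, Fin.succ_ne_zero, ← Finset.sum_mul]; ring
  | succ i => simp [mul_apply, centeringMatrix_apply, one_apply]

/-- explicit formula for the Moore–Penrose pseudo-inverse of the incidence
matrix of a tree rooted at vertex `0` (vertex "1"), in terms of the path matrix `P`:
`D⁺ = [ -(1/n) P 𝟙 , P J ]` with `J = I - (1/n) 𝟙 𝟙ᵀ`. Vertices are `Fin (n+1)`,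
edges are `Fin n`, and column `i` of `P` is the incidence vector of the path from
vertex `i+1` to the root `0`. -/
theorem stmt5 (n : ℕ) (tail head : Fin n → Fin (n + 1))
    (hsimple : SimpleOriented tail head)
    (hconn : OConnected tail head) (hacyc : OAcyclic tail head)
    (P : Matrix (Fin n) (Fin n) ℝ)
    (pathsteps : Fin n → List (Fin n × Bool))
    (hP : ∀ i : Fin n, ((pathsteps i).map Prod.fst).Nodup ∧
      IsOPath tail head (pathsteps i) i.succ 0 ∧
      ∀ j : Fin n, P j i = pathVec (pathsteps i) j) :
    IsMoorePenrose (incMat (n + 1) n tail head)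
      (Matrix.of fun (j : Fin n) (i : Fin (n + 1)) =>
        if h : i = 0 then -(1 / (n + 1 : ℝ)) * ∑ k : Fin n, P j k
        else ((P * ((1 : Matrix (Fin n) (Fin n) ℝ) -
          ((n + 1 : ℝ))⁻¹ • Matrix.of (fun _ _ => (1 : ℝ))) :
            Matrix (Fin n) (Fin n) ℝ)) j (i.pred h)) :=
  stmt5_general n tail head P pathsteps hP
end

section
/- Let D be the incidence matrix of a tree on n vertices and y = y^{(s,t)} the vector that is +1 at s, -1 at t, and 0 elsewhere, where s and t are vertices of the tree. Then D^+ y equals the signed incidence vector of the unique path from s to t in the tree. -/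
open Matrix

lemma incMat_mulVec_pathVec_s17 {n m : ℕ} (tail head : Fin m → Fin n)
    (st : List (Fin m × Bool)) : ∀ (u v : Fin n), IsOPath tail head st u v →
    (incMat n m tail head).mulVec (pathVec st) =
      fun i => (if u = i then (1:ℝ) else 0) - (if v = i then 1 else 0) := by
  induction st with
  | nil =>
    intro u v h
    have huv : u = v := h
    subst huv
    funext i
    simp [pathVec, Matrix.mulVec, dotProduct]
  | cons p rest ih =>
    intro u v h
    obtain ⟨h1, h2⟩ := h
    have hsplit : pathVec (p :: rest) =
        (fun j => if p.1 = j then (if p.2 then (1:ℝ) else -1) else 0) + pathVec rest := by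
      funext j; simp [pathVec]
    rw [hsplit, Matrix.mulVec_add, ih _ _ h2]
    funext i
    have hsingle : (incMat n m tail head).mulVec
        (fun j => if p.1 = j then (if p.2 then (1:ℝ) else -1) else 0) i =
        (if stepSrc tail head p = i then 1 else 0)
          - (if stepDst tail head p = i then 1 else 0) := by
      simp only [Matrix.mulVec, dotProduct, incMat, Matrix.of_apply, mul_ite, mul_one,
        mul_zero, mul_neg]
      rw [Finset.sum_ite_eq (Finset.univ) p.1
        (fun j => if p.2 then ((if tail j = i then (1:ℝ) else 0) - if head j = i then 1 else 0)
          else -((if tail j = i then (1:ℝ) else 0) - if head j = i then 1 else 0))]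
      cases hb : p.2 <;> simp [stepSrc, stepDst, hb] <;> ring
    simp only [Pi.add_apply, hsingle, h1]
    ring

lemma incMat_mulVec_injective (n : ℕ) (tail head : Fin n → Fin (n + 1))
    (hconn : OConnected tail head) :
    Function.Injective (incMat (n + 1) n tail head).mulVec := by
  set D := incMat (n + 1) n tail head with hD
  set L := D.mulVecLin with hL
  have hLapp : ∀ x, L x = D.mulVec x := fun x => rfl
  -- the family e_u - e_0 for u ≠ 0
  set f : {u : Fin (n + 1) // u ≠ 0} → (Fin (n + 1) → ℝ) :=
    fun u => fun i => (if (u : Fin (n + 1)) = i then (1:ℝ) else 0) - (if (0 : Fin (n+1)) = i then 1 else 0)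
    with hf
  have hmem : ∀ u, f u ∈ LinearMap.range L := by
    intro u
    obtain ⟨st, hst⟩ := hconn u 0
    exact ⟨pathVec st, incMat_mulVec_pathVec_s17 tail head st u 0 hst⟩
  have hli : LinearIndependent ℝ f := by
    rw [Fintype.linearIndependent_iff]
    intro g hg u
    have := congrFun hg (u : Fin (n + 1))
    simpa [f, Finset.sum_apply, sub_eq_zero, Subtype.coe_inj, (Ne.symm u.2 : (0 : Fin (n+1)) ≠ u),
      mul_ite, mul_one, mul_zero] using this
  set f' : {u : Fin (n + 1) // u ≠ 0} → LinearMap.range L := fun u => ⟨f u, hmem u⟩ with hf'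
  have hli' : LinearIndependent ℝ f' := by
    apply LinearIndependent.of_comp (LinearMap.range L).subtype
    exact hli
  have hcard : Fintype.card {u : Fin (n + 1) // u ≠ 0} = n := by
    simp [Fintype.card_subtype_compl]
  have hrange : n ≤ Module.finrank ℝ (LinearMap.range L) := by
    have hc2 := hli'.fintype_card_le_finrank
    omega
  have hrn := LinearMap.finrank_range_add_finrank_ker L
  rw [Module.finrank_fintype_fun_eq_card, Fintype.card_fin] at hrn
  have hker : Module.finrank ℝ (LinearMap.ker L) = 0 := by omega
  have : LinearMap.ker L = ⊥ := Submodule.finrank_eq_zero.mp hker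
  have hinj : Function.Injective L := LinearMap.ker_eq_bot.mp this
  exact hinj

/-- for the incidence matrix `D` of a tree and `y = y^{(s,t)}` with
`s ≠ t`, the vector `D⁺ y` is the signed incidence vector of the unique `s`-`t` path. -/
theorem stmt17 (n : ℕ) (tail head : Fin n → Fin (n + 1))
    (hsimple : SimpleOriented tail head)
    (hconn : OConnected tail head) (hacyc : OAcyclic tail head)
    (s t : Fin (n + 1)) (hst : s ≠ t)
    (steps : List (Fin n × Bool))
    (hnodup : (steps.map Prod.fst).Nodup)
    (hpath : IsOPath tail head steps s t)
    (B : Matrix (Fin n) (Fin (n + 1)) ℝ)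
    (hB : IsMoorePenrose (incMat (n + 1) n tail head) B) :
    B.mulVec (fun i => if i = s then (1 : ℝ) else if i = t then -1 else 0) =
      pathVec steps := by
  obtain ⟨hDBD, -, -, -⟩ := hB
  set D := incMat (n + 1) n tail head with hD
  have hinj := incMat_mulVec_injective n tail head hconn
  have hx := incMat_mulVec_pathVec_s17 tail head steps s t hpath
  have hy : D.mulVec (pathVec steps) =
      (fun i => if i = s then (1:ℝ) else if i = t then -1 else 0) := by
    rw [hx]
    funext i
    by_cases h1 : s = i
    · subst h1
      simp [hst, Ne.symm hst]
    · by_cases h2 : t = i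
      · subst h2
        simp [h1, Ne.symm h1]
      · simp [h1, h2, Ne.symm h1, Ne.symm h2]
  rw [← hy]
  have : B.mulVec (D.mulVec (pathVec steps)) = (B * D).mulVec (pathVec steps) :=
    Matrix.mulVec_mulVec _ _ _
  rw [this]
  apply hinj
  rw [Matrix.mulVec_mulVec, ← Matrix.mul_assoc, hDBD]
end
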